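/- Let B be Lorentzian of signature (1, n−1) on V and let F be a p-form on V (1 ≤ p ≤ n−1) of type N with multiple null direction ℓ ≠ 0. Then: (i) for every ε > 0 there exists a pseudo-orthonormal basis (e₀,…,e_{n−1}) of V such that |F(e_{a₁},…,e_{a_p})| < ε for all indices a₁,…,a_p; and (ii) if F ≠ 0, for every M > 0 there exists a pseudo-orthonormal basis such that |F(e_{a₁},…,e_{a_p})| > M for some indices a₁,…,a_p. (This is the zeroth-order case of the ε-property of Remark 1.9: by a suitable boost the components of a type N field strength can be made as small, or as large, as desired.) -/

import Mathlib

open scoped BigOperators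

/-- `ι_ℓ F = 0`: the interior product of the alternating form `F` with the vector `ℓ`
vanishes.  Since `F` is alternating, this is equivalent to saying that `F` vanishes
whenever one of its arguments equals `ℓ`. -/
def IotaZero {V : Type*} [AddCommGroup V] [Module ℝ V] {p : ℕ}
    (F : AlternatingMap ℝ V ℝ (Fin p)) (ℓ : V) : Prop :=
  ∀ v : Fin p → V, (∃ i, v i = ℓ) → F v = 0

/-- `ℓ♭ ∧ F = 0` with respect to the bilinear form `B`. -/
def WedgeFlatZero {V : Type*} [AddCommGroup V] [Module ℝ V] {p : ℕ}
    (B : V →ₗ[ℝ] V →ₗ[ℝ] ℝ) (F : AlternatingMap ℝ V ℝ (Fin p)) (ℓ : V) : Prop :=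
  ∀ v : Fin (p + 1) → V,
    ∑ i : Fin (p + 1), (-1 : ℝ) ^ (i : ℕ) * B ℓ (v i) * F (v ∘ i.succAbove) = 0

/-- `F` is of type N with multiple null direction `ℓ` (Definition 1.1). -/
def TypeN {V : Type*} [AddCommGroup V] [Module ℝ V] {p : ℕ}
    (B : V →ₗ[ℝ] V →ₗ[ℝ] ℝ) (F : AlternatingMap ℝ V ℝ (Fin p)) (ℓ : V) : Prop :=
  IotaZero F ℓ ∧ WedgeFlatZero B F ℓ

/-- The signs `ε₀ = −1`, `ε_a = 1` for `a ≥ 1`. -/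
def epsSign {n : ℕ} (a : Fin n) : ℝ := if (a : ℕ) = 0 then -1 else 1

/-- `e` is a pseudo-orthonormal basis for `B` of Lorentzian signature `(1, n−1)`. -/
def IsLorentzBasis {V : Type*} [AddCommGroup V] [Module ℝ V] {n : ℕ}
    (B : V →ₗ[ℝ] V →ₗ[ℝ] ℝ) (e : Module.Basis (Fin n) ℝ V) : Prop :=
  ∀ a b : Fin n, B (e a) (e b) = if a = b then epsSign a else 0

/-!
If `F ≠ 0`, the two type N conditions force `ℓ` to be null, so `ℓ` completes to a null pair
`(ℓ, m)` with `B(ℓ, m) = 1`. The boost `Λ_c`, which is the identity on `{ℓ, m}^⊥` and sends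
`ℓ ↦ c⁻¹ ℓ`, `m ↦ c m`, is an isometry. Expanding `F(Λ_c v₁, …, Λ_c v_p)` multilinearly, the
terms containing `ℓ` or two copies of `m` vanish, while the terms with one `m` add up to
`(c - 1) F(v)` by `ℓ♭ ∧ F = 0` evaluated at `(m, v₁, …, v_p)`. So `F ∘ Λ_c = c F`: transporting a
pseudo-orthonormal basis by `Λ_c` multiplies every component of `F` by `c`, which may be taken
as small or as large as we like.
-/

open Function

namespace AlternatingMap

variable {R M N ι : Type*} [CommRing R] [AddCommGroup M] [Module R M] [AddCommGroup N]
  [Module R N] [DecidableEq ι]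

theorem map_piecewise_add_smul (f : M [⋀^ι]→ₗ[R] N) (c : ι → R) (x : M) (s : Finset ι)
    (v : ι → M) :
    f (s.piecewise (fun i => v i + c i • x) v) = f v + ∑ j ∈ s, c j • f (update v j x) := by
  induction s using Finset.induction_on generalizing v with
  | empty => simp
  | insert a s ha ih =>
    set w := s.piecewise (fun i => v i + c i • x) v
    have hwa : update w a (v a) = w :=
      update_eq_self_iff.2 (Finset.piecewise_eq_of_notMem _ _ _ ha).symm
    have hwx : update w a x = s.piecewise (fun i => update v a x i + c i • x) (update v a x) := by
      rw [Finset.update_piecewise_of_notMem _ _ _ ha]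
      refine Finset.piecewise_congr (s := s) (fun i hi => ?_) (fun _ _ => rfl)
      rw [update_of_ne (ne_of_mem_of_not_mem hi ha)]
    have hxx : ∑ j ∈ s, c j • f (update (update v a x) j x) = 0 :=
      Finset.sum_eq_zero fun j hj => by
        have hja := ne_of_mem_of_not_mem hj ha
        rw [f.map_eq_zero_of_eq _ (by rw [update_self, update_of_ne hja.symm, update_self]) hja,
          smul_zero]
    rw [Finset.piecewise_insert, f.map_update_add, f.map_update_smul, hwa, hwx, ih, ih, hxx,
      add_zero, Finset.sum_insert ha]
    abel

theorem map_add_smul [Fintype ι] (f : M [⋀^ι]→ₗ[R] N) (c : ι → R) (x : M) (v : ι → M) :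
    f (fun i => v i + c i • x) = f v + ∑ j, c j • f (update v j x) := by
  simpa using f.map_piecewise_add_smul c x Finset.univ v

end AlternatingMap

section TypeN

variable {V : Type*} [AddCommGroup V] [Module ℝ V] {p : ℕ} {B : V →ₗ[ℝ] V →ₗ[ℝ] ℝ}
  {F : AlternatingMap ℝ V ℝ (Fin p)} {ℓ : V}

/-- `ℓ♭ ∧ F = 0` evaluated at `(m, v₀, …, v_{p-1})`: moving `m` from the front to slot `j`
costs the same sign `(-1) ^ j` as the alternating sum attaches to `v j`. -/
theorem WedgeFlatZero.sum_mul_map_update (hw : WedgeFlatZero B F ℓ) (m : V) (v : Fin p → V) :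
    ∑ j, B ℓ (v j) * F (update v j m) = B ℓ m * F v := by
  have h := hw (Fin.cons m v)
  cases p with
  | zero => simpa [Subsingleton.elim _ v] using h.symm
  | succ q =>
    have hsign (j : Fin (q + 1)) :
        F (Fin.cons m (j.removeNth v)) = (-1) ^ (j : ℕ) * F (update v j m) := by
      have := F.neg_one_pow_smul_map_insertNth j m (j.removeNth v)
      rw [Fin.insertNth_removeNth, Matrix.vecCons, zsmul_eq_mul] at this
      exact_mod_cast this.symm
    have hterm (j : Fin (q + 1)) :
        (-1) ^ (j.succ : ℕ) * B ℓ (v j) * ((-1) ^ (j : ℕ) * F (update v j m)) =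
          -(B ℓ (v j) * F (update v j m)) := by
      rw [Fin.val_succ, pow_succ]
      rcases neg_one_pow_eq_or ℝ (j : ℕ) with hj | hj <;> rw [hj] <;> ring
    rw [Fin.sum_univ_succ] at h
    simp only [Fin.cons_zero, Fin.cons_succ, Fin.succAbove_zero, Fin.cons_comp_succ,
      Fin.cons_comp_succ_succAbove, hsign, hterm, Fin.val_zero, pow_zero, one_mul,
      Finset.sum_neg_distrib] at h
    linarith

theorem IotaZero.map_update_self (hι : IotaZero F ℓ) (v : Fin p → V) (j : Fin p) :
    F (update v j ℓ) = 0 :=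
  hι _ ⟨j, update_self j ℓ v⟩

theorem TypeN.apply_self_eq_zero (hN : TypeN B F ℓ) (hF : F ≠ 0) : B ℓ ℓ = 0 := by
  obtain ⟨v, hv⟩ : ∃ v, F v ≠ 0 := by
    by_contra! h
    exact hF (AlternatingMap.ext h)
  have h := hN.2.sum_mul_map_update ℓ v
  simp only [hN.1.map_update_self, mul_zero, Finset.sum_const_zero] at h
  exact (mul_eq_zero.1 h.symm).resolve_right hv

end TypeN

section Boost

variable {V : Type*} [AddCommGroup V] [Module ℝ V] {B : V →ₗ[ℝ] V →ₗ[ℝ] ℝ} {ℓ m : V}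

structure IsNullPair (B : V →ₗ[ℝ] V →ₗ[ℝ] ℝ) (ℓ m : V) : Prop where
  apply_left_left : B ℓ ℓ = 0
  apply_right_right : B m m = 0
  apply_left_right : B ℓ m = 1

theorem exists_isNullPair (hB : B.IsSymm) (hℓ : B ℓ ℓ = 0) {w : V} (hw : B ℓ w ≠ 0) :
    ∃ m, IsNullPair B ℓ m := by
  set u := (B ℓ w)⁻¹ • w
  have hu : B ℓ u = 1 := by simp [u, hw]
  have huℓ : B u ℓ = 1 := by rw [← hB.eq]; exact hu
  refine ⟨u - (B u u / 2) • ℓ, hℓ, ?_, ?_⟩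
  · simp only [map_sub, map_smul, LinearMap.sub_apply, LinearMap.smul_apply, smul_eq_mul, hℓ, hu,
      huℓ]
    ring
  · simp [hℓ, hu]

variable (B ℓ m) in
/-- The boost in the plane of a null pair `(ℓ, m)`: it rescales `ℓ` by `c⁻¹` and `m` by `c`. -/
noncomputable def boost (c : ℝ) : V →ₗ[ℝ] V :=
  LinearMap.id + (c - 1) • (B ℓ).smulRight m + (c⁻¹ - 1) • (B m).smulRight ℓ

theorem boost_apply (c : ℝ) (v : V) :
    boost B ℓ m c v = v + ((c - 1) * B ℓ v) • m + ((c⁻¹ - 1) * B m v) • ℓ := by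
  simp [boost, mul_smul]

theorem TypeN.map_boost {p : ℕ} {F : AlternatingMap ℝ V ℝ (Fin p)} (hN : TypeN B F ℓ)
    (hℓm : B ℓ m = 1) (c : ℝ) (v : Fin p → V) :
    F (fun i => boost B ℓ m c (v i)) = c * F v := by
  simp only [boost_apply]
  rw [F.map_add_smul, F.map_add_smul]
  simp only [hN.1.map_update_self, smul_eq_mul, mul_zero, Finset.sum_const_zero, add_zero,
    mul_assoc]
  rw [← Finset.mul_sum, hN.2.sum_mul_map_update, hℓm]
  ring

theorem boost_one : boost B ℓ m 1 = LinearMap.id := by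
  ext v
  simp [boost_apply]

namespace IsNullPair

variable (h : IsNullPair B ℓ m) (hB : B.IsSymm)
include h

theorem apply_left_boost (c : ℝ) (v : V) : B ℓ (boost B ℓ m c v) = c * B ℓ v := by
  simp only [boost_apply, map_add, map_smul, smul_eq_mul, h.apply_left_left, h.apply_left_right]
  ring

include hB

theorem apply_right_boost (c : ℝ) (v : V) : B m (boost B ℓ m c v) = c⁻¹ * B m v := by
  have hmℓ : B m ℓ = 1 := by rw [← hB.eq]; exact h.apply_left_right
  simp only [boost_apply, map_add, map_smul, smul_eq_mul, h.apply_right_right, hmℓ]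
  ring

theorem boost_mul (c d : ℝ) : boost B ℓ m (c * d) = boost B ℓ m c ∘ₗ boost B ℓ m d := by
  ext v
  rw [LinearMap.comp_apply, boost_apply (c := c), h.apply_left_boost, h.apply_right_boost hB,
    boost_apply, boost_apply, mul_inv]
  module

theorem apply_boost_boost {c : ℝ} (hc : c ≠ 0) (x y : V) :
    B (boost B ℓ m c x) (boost B ℓ m c y) = B x y := by
  rw [boost_apply (c := c) (v := x)]
  simp only [map_add, map_smul, LinearMap.add_apply, LinearMap.smul_apply, smul_eq_mul,
    h.apply_left_boost, h.apply_right_boost hB]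
  rw [boost_apply]
  simp only [map_add, map_smul, smul_eq_mul, ← hB.eq ℓ x, ← hB.eq m x, RingHom.id_apply]
  field_simp
  ring

noncomputable def boostEquiv {c : ℝ} (hc : c ≠ 0) : V ≃ₗ[ℝ] V :=
  LinearEquiv.ofLinearMap (boost B ℓ m c) (boost B ℓ m c⁻¹)
    (by rw [← h.boost_mul hB, mul_inv_cancel₀ hc, boost_one])
    (by rw [← h.boost_mul hB, inv_mul_cancel₀ hc, boost_one])

end IsNullPair

end Boost

theorem epsSign_ne_zero {n : ℕ} (a : Fin n) : epsSign a ≠ 0 := by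
  unfold epsSign
  split_ifs <;> norm_num

namespace IsLorentzBasis

variable {V : Type*} [AddCommGroup V] [Module ℝ V] {n : ℕ} {B : V →ₗ[ℝ] V →ₗ[ℝ] ℝ}
  {e : Module.Basis (Fin n) ℝ V}

theorem isSymm (he : IsLorentzBasis B e) : B.IsSymm := by
  refine LinearMap.isSymm_iff_eq_flip.2 (e.ext fun a => e.ext fun b => ?_)
  rw [LinearMap.flip_apply, he a b, he b a]
  rcases eq_or_ne a b with rfl | hab
  · rfl
  · rw [if_neg hab, if_neg hab.symm]

theorem apply_basis (he : IsLorentzBasis B e) (v : V) (a : Fin n) :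
    B v (e a) = epsSign a * e.repr v a := by
  have : B.flip (e a) = epsSign a • e.coord a := e.ext fun b => by
    simp only [LinearMap.flip_apply, he b a, LinearMap.smul_apply, e.coord_apply, e.repr_self,
      Finsupp.single_apply, smul_eq_mul, mul_ite, mul_one, mul_zero]
    split_ifs with hba <;> simp only [hba]
  exact LinearMap.congr_fun this v

theorem exists_apply_basis_ne_zero (he : IsLorentzBasis B e) {v : V} (hv : v ≠ 0) :
    ∃ a, B v (e a) ≠ 0 := by
  obtain ⟨a, ha⟩ : ∃ a, e.repr v a ≠ 0 := by
    by_contra! h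
    exact hv (e.ext_elem (by simpa using h))
  exact ⟨a, he.apply_basis v a ▸ mul_ne_zero (epsSign_ne_zero a) ha⟩

theorem map (he : IsLorentzBasis B e) (φ : V ≃ₗ[ℝ] V) (hφ : ∀ x y, B (φ x) (φ y) = B x y) :
    IsLorentzBasis B (e.map φ) := fun a b => by
  rw [e.map_apply, e.map_apply, hφ]
  exact he a b

end IsLorentzBasis

theorem Module.Basis.exists_alternatingMap_apply_ne_zero {ι V : Type*} [AddCommGroup V]
    [Module ℝ V] {p : ℕ} (e : Module.Basis ι ℝ V) {F : AlternatingMap ℝ V ℝ (Fin p)}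
    (hF : F ≠ 0) : ∃ a : Fin p → ι, F (fun i => e (a i)) ≠ 0 := by
  by_contra! h
  exact hF (e.ext_alternating fun a _ => by simpa using h a)

namespace TypeN

variable {V : Type*} [AddCommGroup V] [Module ℝ V] {n p : ℕ} {B : V →ₗ[ℝ] V →ₗ[ℝ] ℝ}
  {F : AlternatingMap ℝ V ℝ (Fin p)} {ℓ : V} {e : Module.Basis (Fin n) ℝ V}

theorem exists_isLorentzBasis_map_eq_mul (hN : TypeN B F ℓ) (hℓ : ℓ ≠ 0)
    (he : IsLorentzBasis B e) {c : ℝ} (hc : c ≠ 0) :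
    ∃ e' : Module.Basis (Fin n) ℝ V, IsLorentzBasis B e' ∧
      ∀ a : Fin p → Fin n, F (fun i => e' (a i)) = c * F (fun i => e (a i)) := by
  rcases eq_or_ne F 0 with rfl | hF
  · exact ⟨e, he, fun _ => by simp⟩
  have hB := he.isSymm
  obtain ⟨a, ha⟩ := he.exists_apply_basis_ne_zero hℓ
  obtain ⟨m, hm⟩ := exists_isNullPair hB (hN.apply_self_eq_zero hF) ha
  exact ⟨e.map (hm.boostEquiv hB hc), he.map _ (hm.apply_boost_boost hB hc),
    fun a => hN.map_boost hm.apply_left_right c _⟩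

theorem exists_isLorentzBasis_abs_lt (hN : TypeN B F ℓ) (hℓ : ℓ ≠ 0) (he : IsLorentzBasis B e)
    {ε : ℝ} (hε : 0 < ε) :
    ∃ e' : Module.Basis (Fin n) ℝ V, IsLorentzBasis B e' ∧
      ∀ a : Fin p → Fin n, |F (fun i => e' (a i))| < ε := by
  set C := ∑ a : Fin p → Fin n, |F (fun i => e (a i))|
  have hc : 0 < ε / (C + 1) := div_pos hε (by positivity)
  obtain ⟨e', he', hFe'⟩ := hN.exists_isLorentzBasis_map_eq_mul hℓ he hc.ne'
  refine ⟨e', he', fun a => ?_⟩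
  have hle : |F (fun i => e (a i))| ≤ C :=
    Finset.single_le_sum (fun b _ => abs_nonneg (F fun i => e (b i))) (Finset.mem_univ a)
  rw [hFe', abs_mul, abs_of_pos hc, div_mul_eq_mul_div, div_lt_iff₀ (by positivity)]
  nlinarith

theorem exists_isLorentzBasis_lt_abs (hN : TypeN B F ℓ) (hℓ : ℓ ≠ 0) (he : IsLorentzBasis B e)
    (hF : F ≠ 0) {M : ℝ} (hM : 0 < M) :
    ∃ e' : Module.Basis (Fin n) ℝ V, IsLorentzBasis B e' ∧
      ∃ a : Fin p → Fin n, M < |F (fun i => e' (a i))| := by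
  obtain ⟨a, ha⟩ := e.exists_alternatingMap_apply_ne_zero hF
  have hpos : 0 < |F (fun i => e (a i))| := abs_pos.2 ha
  have hc : 0 < (M + 1) / |F (fun i => e (a i))| := by positivity
  obtain ⟨e', he', hFe'⟩ := hN.exists_isLorentzBasis_map_eq_mul hℓ he hc.ne'
  refine ⟨e', he', a, ?_⟩
  rw [hFe', abs_mul, abs_of_pos hc, div_mul_cancel₀ _ hpos.ne']
  linarith

end TypeN

theorem typeN_epsilon_property_general {V : Type*} [AddCommGroup V] [Module ℝ V]
    {n : ℕ}
    (B : V →ₗ[ℝ] V →ₗ[ℝ] ℝ)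
    (hLor : ∃ e : Module.Basis (Fin n) ℝ V, IsLorentzBasis B e)
    {p : ℕ}
    (F : AlternatingMap ℝ V ℝ (Fin p))
    {ℓ : V} (hℓ : ℓ ≠ 0) (hN : TypeN B F ℓ) :
    (∀ ε : ℝ, 0 < ε → ∃ e : Module.Basis (Fin n) ℝ V, IsLorentzBasis B e ∧
        ∀ a : Fin p → Fin n, |F (fun i => e (a i))| < ε) ∧
    (F ≠ 0 → ∀ M : ℝ, 0 < M → ∃ e : Module.Basis (Fin n) ℝ V, IsLorentzBasis B e ∧
        ∃ a : Fin p → Fin n, M < |F (fun i => e (a i))|) := by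
  obtain ⟨e, he⟩ := hLor
  exact ⟨fun _ hε => hN.exists_isLorentzBasis_abs_lt hℓ he hε,
    fun hF _ hM => hN.exists_isLorentzBasis_lt_abs hℓ he hF hM⟩

/-- ε-property, zeroth order, Remark 1.9: the frame components of a
type N `p`-form can be made (i) as small as desired in a suitable pseudo-orthonormal
frame, and (ii), if `F ≠ 0`, as large as desired. -/
theorem typeN_epsilon_property {V : Type*} [AddCommGroup V] [Module ℝ V]
    [FiniteDimensional ℝ V] {n : ℕ}
    (B : V →ₗ[ℝ] V →ₗ[ℝ] ℝ)
    (hLor : ∃ e : Module.Basis (Fin n) ℝ V, IsLorentzBasis B e)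
    {p : ℕ} (hp1 : 1 ≤ p) (hpn : p ≤ n - 1)
    (F : AlternatingMap ℝ V ℝ (Fin p))
    {ℓ : V} (hℓ : ℓ ≠ 0) (hN : TypeN B F ℓ) :
    (∀ ε : ℝ, 0 < ε → ∃ e : Module.Basis (Fin n) ℝ V, IsLorentzBasis B e ∧
        ∀ a : Fin p → Fin n, |F (fun i => e (a i))| < ε) ∧
    (F ≠ 0 → ∀ M : ℝ, 0 < M → ∃ e : Module.Basis (Fin n) ℝ V, IsLorentzBasis B e ∧
        ∃ a : Fin p → Fin n, M < |F (fun i => e (a i))|) :=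
  typeN_epsilon_property_general B hLor F hℓ hN
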